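/- arXiv:0902.1047 — 3 statements merged into one kernel-verified Lean document; each statement's English description precedes it below -/
import Mathlib

section
/- Let G be a finite simple graph on n vertices with no isolated vertices (minimum degree at least 1) and maximum degree at most Δ. Then G has a matching of size at least ⌊n/(2(2Δ−1))⌋. In particular, a graph on at least 2(k+1)(2k+1) vertices with minimum degree at least 1 and maximum degree at most k+1 has a matching of size at least k+1. -/
/-!
Take a maximum matching `M` and let `C` be the set of its `2|M|` covered vertices. By
maximality every neighbour of an uncovered vertex is covered, and since there are no
isolated vertices every uncovered vertex has such a neighbour. A covered vertex has at most
`Δ - 1` uncovered neighbours, its partner being covered. Counting the edges between `C` and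
its complement gives `n - 2|M| ≤ 2|M|(Δ - 1)`, i.e. `n ≤ 2Δ|M| ≤ 2(2Δ - 1)|M|`.
-/

/-- A matching given as a finite set of edges of `G`: a set of edges of `G`,
no two distinct edges of which share an endpoint. -/
def IsMatchingEdgeSet {V : Type*} [Fintype V] [DecidableEq V] (G : SimpleGraph V)
    [DecidableRel G.Adj] (M : Finset (Sym2 V)) : Prop :=
  M ⊆ G.edgeFinset ∧ ∀ e ∈ M, ∀ f ∈ M, e ≠ f → ∀ v : V, v ∈ e → v ∉ f

open Finset

namespace SimpleGraph

variable {V : Type*} [Fintype V] [DecidableEq V] {G : SimpleGraph V} [DecidableRel G.Adj]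

theorem card_compl_le_card_mul_of_forall_exists_adj {C : Finset V} {Δ : ℕ}
    (hmax : G.maxDegree ≤ Δ) (hout : ∀ u ∉ C, ∃ w ∈ C, G.Adj u w)
    (hin : ∀ w ∈ C, ∃ p ∈ C, G.Adj w p) : #Cᶜ ≤ #C * (Δ - 1) := by
  have habove : ∀ u ∈ Cᶜ, 1 ≤ #(C.bipartiteAbove G.Adj u) := by
    intro u hu
    obtain ⟨w, hw, hadj⟩ := hout u (mem_compl.1 hu)
    exact card_pos.2 ⟨w, mem_filter.2 ⟨hw, hadj⟩⟩
  have hbelow : ∀ w ∈ C, #(Cᶜ.bipartiteBelow G.Adj w) ≤ Δ - 1 := by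
    intro w hw
    obtain ⟨p, hp, hadj⟩ := hin w hw
    have hsub : Cᶜ.bipartiteBelow G.Adj w ⊆ (G.neighborFinset w).erase p := by
      intro u hu
      obtain ⟨huC, hadj'⟩ := mem_filter.1 hu
      exact mem_erase.2 ⟨by rintro rfl; exact mem_compl.1 huC hp, by simpa using hadj'.symm⟩
    calc #(Cᶜ.bipartiteBelow G.Adj w) ≤ #((G.neighborFinset w).erase p) := card_le_card hsub
      _ = G.degree w - 1 := by
        rw [card_erase_of_mem (by simpa using hadj), card_neighborFinset_eq_degree]
      _ ≤ Δ - 1 := Nat.sub_le_sub_right ((G.degree_le_maxDegree w).trans hmax) 1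
  simpa using card_mul_le_card_mul G.Adj habove hbelow

end SimpleGraph

section Matching

variable {V : Type*} [DecidableEq V]

def coveredVertices (M : Finset (Sym2 V)) : Finset V := M.biUnion Sym2.toFinset

theorem mem_coveredVertices {M : Finset (Sym2 V)} {v : V} :
    v ∈ coveredVertices M ↔ ∃ e ∈ M, v ∈ e := by
  simp [coveredVertices, Sym2.mem_toFinset]

variable [Fintype V] {G : SimpleGraph V} [DecidableRel G.Adj] {M : Finset (Sym2 V)}

theorem isMatchingEdgeSet_empty : IsMatchingEdgeSet G ∅ := ⟨empty_subset _, by simp⟩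

namespace IsMatchingEdgeSet

theorem adj_of_mem (hM : IsMatchingEdgeSet G M) {u w : V} (h : s(u, w) ∈ M) : G.Adj u w := by
  simpa using hM.1 h

theorem card_coveredVertices (hM : IsMatchingEdgeSet G M) :
    #(coveredVertices M) = 2 * #M := by
  rw [coveredVertices, card_biUnion, sum_const_nat, mul_comm]
  · intro e he
    exact Sym2.card_toFinset_of_not_isDiag e
      (G.not_isDiag_of_mem_edgeSet (by simpa using hM.1 he))
  · intro e he f hf hef
    exact disjoint_left.2 fun v hve hvf =>
      hM.2 e he f hf hef v (Sym2.mem_toFinset.1 hve) (Sym2.mem_toFinset.1 hvf)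

theorem exists_adj_mem_coveredVertices (hM : IsMatchingEdgeSet G M) {v : V}
    (hv : v ∈ coveredVertices M) : ∃ w ∈ coveredVertices M, G.Adj v w := by
  obtain ⟨e, he, hve⟩ := mem_coveredVertices.1 hv
  obtain ⟨w, rfl⟩ := Sym2.mem_iff_exists.1 hve
  exact ⟨w, mem_coveredVertices.2 ⟨_, he, Sym2.mem_mk_right v w⟩, hM.adj_of_mem he⟩

theorem insert (hM : IsMatchingEdgeSet G M) {u w : V} (hadj : G.Adj u w)
    (hu : u ∉ coveredVertices M) (hw : w ∉ coveredVertices M) :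
    IsMatchingEdgeSet G (insert s(u, w) M) := by
  have hfresh : ∀ f ∈ M, ∀ v ∈ s(u, w), v ∉ f := by
    intro f hf v hv hvf
    rcases Sym2.mem_iff.1 hv with rfl | rfl
    exacts [hu (mem_coveredVertices.2 ⟨f, hf, hvf⟩), hw (mem_coveredVertices.2 ⟨f, hf, hvf⟩)]
  refine ⟨insert_subset (by simpa using hadj) hM.1, ?_⟩
  intro e he f hf hef v hve hvf
  rcases mem_insert.1 he with rfl | he <;> rcases mem_insert.1 hf with rfl | hf
  · exact hef rfl
  · exact hfresh f hf v hve hvf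
  · exact hfresh e he v hvf hve
  · exact hM.2 e he f hf hef v hve hvf

theorem adj_mem_coveredVertices_of_forall_card_le (hM : IsMatchingEdgeSet G M)
    (hmax : ∀ M', IsMatchingEdgeSet G M' → #M' ≤ #M) {u w : V}
    (hu : u ∉ coveredVertices M) (hadj : G.Adj u w) : w ∈ coveredVertices M := by
  by_contra hw
  have hnew : s(u, w) ∉ M := fun h => hu (mem_coveredVertices.2 ⟨_, h, Sym2.mem_mk_left u w⟩)
  have := hmax _ (hM.insert hadj hu hw)
  rw [card_insert_of_notMem hnew] at this
  omega

end IsMatchingEdgeSet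

variable (G) in
theorem exists_isMatchingEdgeSet_forall_card_le :
    ∃ M, IsMatchingEdgeSet G M ∧ ∀ M', IsMatchingEdgeSet G M' → #M' ≤ #M := by
  classical
  obtain ⟨M, hM, hmax⟩ := exists_max_image (G.edgeFinset.powerset.filter (IsMatchingEdgeSet G))
    card ⟨∅, mem_filter.2 ⟨empty_mem_powerset _, isMatchingEdgeSet_empty⟩⟩
  refine ⟨M, (mem_filter.1 hM).2, fun M' hM' => hmax M' ?_⟩
  exact mem_filter.2 ⟨mem_powerset.2 hM'.1, hM'⟩

theorem exists_isMatchingEdgeSet_card_le_mul {Δ : ℕ} (hmin : ∀ v, 1 ≤ G.degree v)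
    (hmaxDeg : G.maxDegree ≤ Δ) : ∃ M, IsMatchingEdgeSet G M ∧ Fintype.card V ≤ 2 * Δ * #M := by
  rcases Nat.eq_zero_or_pos Δ with rfl | hΔ
  · have : IsEmpty V :=
      ⟨fun v => by have := (hmin v).trans (G.degree_le_maxDegree v); omega⟩
    exact ⟨∅, isMatchingEdgeSet_empty, by simp⟩
  obtain ⟨M, hM, hmax⟩ := exists_isMatchingEdgeSet_forall_card_le G
  refine ⟨M, hM, ?_⟩
  have hcompl : #(coveredVertices M)ᶜ ≤ #(coveredVertices M) * (Δ - 1) :=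
    G.card_compl_le_card_mul_of_forall_exists_adj hmaxDeg
      (fun u hu => by
        obtain ⟨w, hadj⟩ := (G.degree_pos_iff_exists_adj u).1 (hmin u)
        exact ⟨w, hM.adj_mem_coveredVertices_of_forall_card_le hmax hu hadj, hadj⟩)
      (fun w hw => hM.exists_adj_mem_coveredVertices hw)
  have hsplit := card_add_card_compl (coveredVertices M)
  rw [hM.card_coveredVertices] at hcompl hsplit
  calc Fintype.card V ≤ 2 * #M * (1 + (Δ - 1)) := by rw [mul_add]; omega
    _ = 2 * Δ * #M := by rw [Nat.add_sub_cancel' hΔ]; ring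

theorem exists_isMatchingEdgeSet_card_div_le {Δ : ℕ} (hmin : ∀ v, 1 ≤ G.degree v)
    (hmaxDeg : G.maxDegree ≤ Δ) :
    ∃ M, IsMatchingEdgeSet G M ∧ Fintype.card V / (2 * (2 * Δ - 1)) ≤ #M := by
  obtain ⟨M, hM, hcard⟩ := exists_isMatchingEdgeSet_card_le_mul hmin hmaxDeg
  refine ⟨M, hM, Nat.div_le_of_le_mul ?_⟩
  rcases Nat.eq_zero_or_pos Δ with rfl | hΔ
  · simpa using hcard
  · exact hcard.trans (Nat.mul_le_mul_right _ (by omega))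

end Matching

/-- A finite simple graph on `n` vertices with no isolated vertices and maximum degree
at most `Δ` has a matching of size at least `⌊n / (2(2Δ - 1))⌋`. In particular, a graph
on at least `2(k+1)(2k+1)` vertices with minimum degree at least `1` and maximum degree
at most `k + 1` has a matching of size at least `k + 1`. -/
theorem matching_of_minDegree_one_maxDegree :
    (∀ (V : Type) [Fintype V] [DecidableEq V] (G : SimpleGraph V) [DecidableRel G.Adj]
        (Δ : ℕ), (∀ v : V, 1 ≤ G.degree v) → G.maxDegree ≤ Δ →
        ∃ M : Finset (Sym2 V), IsMatchingEdgeSet G M ∧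
          Fintype.card V / (2 * (2 * Δ - 1)) ≤ M.card) ∧
    (∀ (V : Type) [Fintype V] [DecidableEq V] (G : SimpleGraph V) [DecidableRel G.Adj]
        (k : ℕ), 2 * (k + 1) * (2 * k + 1) ≤ Fintype.card V →
        (∀ v : V, 1 ≤ G.degree v) → G.maxDegree ≤ k + 1 →
        ∃ M : Finset (Sym2 V), IsMatchingEdgeSet G M ∧ k + 1 ≤ M.card) := by
  refine ⟨fun V _ _ G _ Δ hmin hmax => exists_isMatchingEdgeSet_card_div_le hmin hmax, ?_⟩
  intro V _ _ G _ k hcard hmin hmax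
  obtain ⟨M, hM, hMcard⟩ := exists_isMatchingEdgeSet_card_div_le hmin hmax
  refine ⟨M, hM, le_trans ?_ hMcard⟩
  rw [Nat.le_div_iff_mul_le (by omega)]
  calc (k + 1) * (2 * (2 * (k + 1) - 1)) = 2 * (k + 1) * (2 * k + 1) := by
        rw [show 2 * (k + 1) - 1 = 2 * k + 1 by omega]; ring
    _ ≤ Fintype.card V := hcard
end

section
/- (Safeness of Rule Common Factor.) Let T be a finite tree, let R be a request in T, and let R_1, …, R_{k+1} be k+1 requests, each distinct from R, such that for every i ≠ j the set of common edges of the paths of R_i and R_j is contained in the set of edges of the path of R. Then every set S of at most k edges of T that intersects the edge set of each of the paths of R_1, …, R_{k+1} also intersects the edge set of the path of R. Consequently, if R, R_1, …, R_{k+1} all belong to a request set P, then (T,P) has a multicut of size at most k if and only if (T, P \ {R}) does. -/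
/-- The unique path between two vertices of a tree, as a walk. -/
noncomputable def treePath {V : Type*} {G : SimpleGraph V} (hG : G.IsTree) (u v : V) :
    G.Walk u v :=
  (hG.existsUnique_path u v).exists.choose

/-- `S` is a multicut of `(T, P)`: a set of edges of the tree meeting the (unique) path
of every request in `P`. -/
def IsMulticut {V : Type*} {G : SimpleGraph V} (hG : G.IsTree)
    (P : Finset (V × V)) (S : Finset (Sym2 V)) : Prop :=
  (∀ e ∈ S, e ∈ G.edgeSet) ∧
    ∀ r ∈ P, ∃ e ∈ S, e ∈ (treePath hG r.1 r.2).edges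

/-- Safeness of Rule Common Factor: if `R₁, …, R_{k+1}` are requests distinct from `R`
whose pairwise common factors are contained in the edge set of the path of `R`, then any
set of at most `k` edges cutting each `Rᵢ` also cuts `R`; consequently, if all these
requests belong to `P`, then `(T, P)` has a multicut of size at most `k` iff
`(T, P \ {R})` does. -/
theorem common_factor_rule_safe {V : Type*} [Fintype V] [DecidableEq V]
    (G : SimpleGraph V) (hG : G.IsTree) (k : ℕ)
    (R : V × V) (hRreq : R.1 ≠ R.2)
    (Rs : Fin (k + 1) → V × V) (hRsreq : ∀ i, (Rs i).1 ≠ (Rs i).2)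
    (hRsne : ∀ i, Rs i ≠ R)
    (hcf : ∀ i j, i ≠ j → ∀ e : Sym2 V,
      e ∈ (treePath hG (Rs i).1 (Rs i).2).edges →
      e ∈ (treePath hG (Rs j).1 (Rs j).2).edges →
      e ∈ (treePath hG R.1 R.2).edges) :
    (∀ S : Finset (Sym2 V), (∀ e ∈ S, e ∈ G.edgeSet) → S.card ≤ k →
      (∀ i, ∃ e ∈ S, e ∈ (treePath hG (Rs i).1 (Rs i).2).edges) →
      ∃ e ∈ S, e ∈ (treePath hG R.1 R.2).edges) ∧
    (∀ P : Finset (V × V), (∀ r ∈ P, r.1 ≠ r.2) → R ∈ P → (∀ i, Rs i ∈ P) →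
      ((∃ S : Finset (Sym2 V), IsMulticut hG P S ∧ S.card ≤ k) ↔
       (∃ S : Finset (Sym2 V), IsMulticut hG (P.erase R) S ∧ S.card ≤ k))) := by
  have key : ∀ S : Finset (Sym2 V), (∀ e ∈ S, e ∈ G.edgeSet) → S.card ≤ k →
      (∀ i, ∃ e ∈ S, e ∈ (treePath hG (Rs i).1 (Rs i).2).edges) →
      ∃ e ∈ S, e ∈ (treePath hG R.1 R.2).edges := by
    intro S _ hcard hhit
    choose f hfS hfP using hhit
    obtain ⟨i, -, j, -, hij, hfij⟩ :=
      Finset.exists_ne_map_eq_of_card_lt_of_maps_to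
        (s := Finset.univ) (t := S)
        (by simpa using Nat.lt_succ_of_le hcard) (fun i _ => hfS i)
    refine ⟨f i, hfS i, hcf i j hij (f i) (hfP i) ?_⟩
    rw [hfij]; exact hfP j
  refine ⟨key, fun P hP hRP hRsP => ?_⟩
  constructor
  · rintro ⟨S, ⟨hSE, hScut⟩, hScard⟩
    exact ⟨S, ⟨hSE, fun r hr => hScut r (Finset.mem_of_mem_erase hr)⟩, hScard⟩
  · rintro ⟨S, ⟨hSE, hScut⟩, hScard⟩
    refine ⟨S, ⟨hSE, fun r hr => ?_⟩, hScard⟩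
    by_cases hrR : r = R
    · subst hrR
      exact key S hSE hScard fun i =>
        hScut (Rs i) (Finset.mem_erase.mpr ⟨hRsne i, hRsP i⟩)
    · exact hScut r (Finset.mem_erase.mpr ⟨hrR, hr⟩)
end

section
/- Let T be a finite tree and let S be a nonempty set of vertices of T. Then the number of connected components of T − S (the subgraph of T induced on the vertices not in S) that are adjacent in T to at least two distinct vertices of S is at most |S| − 1. -/
/-!
Root the tree at some `r ∈ S`. Every walk from `r` to a vertex passes through its parent. If two
distinct vertices `u₁, u₂ ∈ S` were both parents of vertices of one component `C` of `T − S`, the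
walk from `r` through `u₁` into `C` and on to the child of `u₂` leaves `S` after `u₁`, so `u₂` lies
on the geodesic from `r` to `u₁`, strictly closer to `r`; symmetrically `u₁` is strictly closer
than `u₂`. Hence a component adjacent to two vertices of `S` has a child in `S`. That child is not
`r` and determines the component through its unique parent, which injects the components into
`S \ {r}`.
-/

namespace SimpleGraph

variable {V : Type*} {G : SimpleGraph V}

theorem Walk.dist_lt_length_of_mem_support {u v x : V} (p : G.Walk u v) (hx : x ∈ p.support)
    (hxv : x ≠ v) : G.dist u x < p.length := by
  classical
  exact (dist_le _).trans_lt (p.length_takeUntil_lt_length hx hxv)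

/-- Rooted at `r`, the vertex `u` is a child of a vertex of the component `C`. -/
def HangsBelow (G : SimpleGraph V) (r : V) {s : Set V} (C : (G.induce s).ConnectedComponent)
    (u : V) : Prop :=
  ∃ v : s, (G.induce s).connectedComponentMk v = C ∧ G.Adj v u ∧ G.dist r u = G.dist r v + 1

theorem HangsBelow.ne_root {r u : V} {s : Set V} {C : (G.induce s).ConnectedComponent}
    (h : G.HangsBelow r C u) : u ≠ r := by
  rintro rfl
  obtain ⟨v, -, -, hd⟩ := h
  simp at hd

namespace IsTree

theorem mem_support_of_adj_of_dist_eq_add_one (hG : G.IsTree) {r u v : V} (hadj : G.Adj u v)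
    (hd : G.dist r v = G.dist r u + 1) (W : G.Walk r v) : u ∈ W.support := by
  classical
  obtain ⟨q, -, hq⟩ := hG.connected.exists_path_of_dist r u
  have hpath : (q.concat hadj).IsPath :=
    (q.concat hadj).isPath_of_length_eq_dist (by rw [Walk.length_concat, hq, hd])
  have hbypass : W.bypass = q.concat hadj :=
    (hG.existsUnique_path r v).unique W.bypass_isPath hpath
  apply W.support_bypass_subset_support
  simp [hbypass, Walk.support_concat]

theorem eq_of_adj_of_dist_eq_add_one (hG : G.IsTree) {r u v v' : V} (h : G.Adj v u)
    (h' : G.Adj v' u) (hd : G.dist r u = G.dist r v + 1) (hd' : G.dist r u = G.dist r v' + 1) :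
    v = v' := by
  obtain ⟨p, hp, -⟩ := hG.connected.exists_path_of_dist r u
  exact (hG.isAcyclic.eq_penultimate_of_adj_end hp h.symm
    (hG.mem_support_of_adj_of_dist_eq_add_one h hd p)).trans
    (hG.isAcyclic.eq_penultimate_of_adj_end hp h'.symm
      (hG.mem_support_of_adj_of_dist_eq_add_one h' hd' p)).symm

variable {s : Set V}

theorem mem_support_of_reachable_induce (hG : G.IsTree) {r u₁ u₂ : V} {v₁ v₂ : s}
    (hreach : (G.induce s).Reachable v₁ v₂) (h₁ : G.Adj u₁ v₁) (h₂ : G.Adj u₂ v₂)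
    (hd₂ : G.dist r v₂ = G.dist r u₂ + 1) (hu₂ : u₂ ∉ s) (q : G.Walk r u₁) : u₂ ∈ q.support := by
  obtain ⟨w⟩ := hreach
  have hmem := hG.mem_support_of_adj_of_dist_eq_add_one h₂ hd₂
    ((q.concat h₁).append (w.map (Embedding.induce s).toHom))
  replace hmem := (Walk.mem_support_append_iff _ _).mp hmem
  simp only [Walk.support_concat, List.mem_append, List.mem_singleton] at hmem
  rcases hmem with (hq | rfl) | hw
  · exact hq
  · exact absurd v₁.2 hu₂
  · obtain ⟨x, -, rfl⟩ := List.mem_map.mp (by rw [← Walk.support_map]; exact hw)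
    exact absurd x.2 hu₂

theorem eq_of_reachable_induce (hG : G.IsTree) {r u₁ u₂ : V} {v₁ v₂ : s}
    (hreach : (G.induce s).Reachable v₁ v₂) (h₁ : G.Adj u₁ v₁) (h₂ : G.Adj u₂ v₂)
    (hu₁ : u₁ ∉ s) (hu₂ : u₂ ∉ s) (hd₁ : G.dist r v₁ = G.dist r u₁ + 1)
    (hd₂ : G.dist r v₂ = G.dist r u₂ + 1) : u₁ = u₂ := by
  obtain ⟨q₁, -, hq₁⟩ := hG.connected.exists_path_of_dist r u₁
  obtain ⟨q₂, -, hq₂⟩ := hG.connected.exists_path_of_dist r u₂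
  by_contra hne
  have hlt₂ := q₁.dist_lt_length_of_mem_support
    (hG.mem_support_of_reachable_induce hreach h₁ h₂ hd₂ hu₂ q₁) (Ne.symm hne)
  have hlt₁ := q₂.dist_lt_length_of_mem_support
    (hG.mem_support_of_reachable_induce hreach.symm h₂ h₁ hd₁ hu₁ q₂) hne
  omega

theorem hangsBelow_or_hangsBelow (hG : G.IsTree) {r u₁ u₂ : V}
    {C : (G.induce s).ConnectedComponent} (hne : u₁ ≠ u₂) (hu₁ : u₁ ∉ s) (hu₂ : u₂ ∉ s)
    (h₁ : ∃ v : s, (G.induce s).connectedComponentMk v = C ∧ G.Adj v u₁)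
    (h₂ : ∃ v : s, (G.induce s).connectedComponentMk v = C ∧ G.Adj v u₂) :
    G.HangsBelow r C u₁ ∨ G.HangsBelow r C u₂ := by
  obtain ⟨v₁, rfl, hadj₁⟩ := h₁
  obtain ⟨v₂, hv₂, hadj₂⟩ := h₂
  by_contra! hnot
  have hd₁ := (hG.dist_eq_dist_add_one_of_adj r hadj₁).resolve_right
    fun hd ↦ hnot.1 ⟨v₁, rfl, hadj₁, hd⟩
  have hd₂ := (hG.dist_eq_dist_add_one_of_adj r hadj₂).resolve_right
    fun hd ↦ hnot.2 ⟨v₂, hv₂, hadj₂, hd⟩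
  exact hne <| hG.eq_of_reachable_induce (ConnectedComponent.exact hv₂.symm)
    hadj₁.symm hadj₂.symm hu₁ hu₂ hd₁ hd₂

theorem eq_of_hangsBelow (hG : G.IsTree) {r u : V} {C C' : (G.induce s).ConnectedComponent}
    (h : G.HangsBelow r C u) (h' : G.HangsBelow r C' u) : C = C' := by
  obtain ⟨v, rfl, hadj, hd⟩ := h
  obtain ⟨v', rfl, hadj', hd'⟩ := h'
  rw [Subtype.ext (hG.eq_of_adj_of_dist_eq_add_one hadj hadj' hd hd')]

theorem ncard_le_of_forall_exists_hangsBelow (hG : G.IsTree) {r : V}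
    {A : Set (G.induce s).ConnectedComponent} {B : Set V} (hB : B.Finite)
    (hA : ∀ C ∈ A, ∃ u ∈ B, G.HangsBelow r C u) : A.ncard ≤ B.ncard := by
  have := hG.connected.nonempty
  choose! f hfB hf using hA
  exact Set.ncard_le_ncard_of_injOn f hfB
    (fun C hC C' hC' hCC' ↦ hG.eq_of_hangsBelow (hf C hC) (hCC' ▸ hf C' hC')) hB

end IsTree

end SimpleGraph

theorem components_adjacent_to_two_le_general {V : Type*}
    (G : SimpleGraph V) (hG : G.IsTree) (S : Finset V) (hS : S.Nonempty) :
    {C : (G.induce {v : V | v ∉ S}).ConnectedComponent |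
        ∃ s₁ ∈ S, ∃ s₂ ∈ S, s₁ ≠ s₂ ∧
          (∃ v : {v : V | v ∉ S},
            (G.induce {v : V | v ∉ S}).connectedComponentMk v = C ∧ G.Adj ↑v s₁) ∧
          (∃ w : {v : V | v ∉ S},
            (G.induce {v : V | v ∉ S}).connectedComponentMk w = C ∧ G.Adj ↑w s₂)}.ncard
      ≤ S.card - 1 := by
  obtain ⟨r, hr⟩ := hS
  calc _ ≤ (↑S \ {r} : Set V).ncard := by
        refine hG.ncard_le_of_forall_exists_hangsBelow (r := r) S.finite_toSet.sdiff ?_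
        rintro C ⟨u₁, hu₁, u₂, hu₂, hne, h₁, h₂⟩
        rcases hG.hangsBelow_or_hangsBelow hne (not_not.mpr hu₁) (not_not.mpr hu₂) h₁ h₂ with
          h | h
        · exact ⟨u₁, ⟨hu₁, h.ne_root⟩, h⟩
        · exact ⟨u₂, ⟨hu₂, h.ne_root⟩, h⟩
    _ = S.card - 1 := by
        rw [Set.ncard_sdiff_singleton_of_mem hr, Set.ncard_coe_finset]

/-- In a finite tree `T`, for any nonempty set `S` of vertices, the number of connected
components of `T - S` adjacent (in `T`) to at least two distinct vertices of `S` is at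
most `|S| - 1`. -/
theorem components_adjacent_to_two_le {V : Type*} [Fintype V] [DecidableEq V]
    (G : SimpleGraph V) (hG : G.IsTree) (S : Finset V) (hS : S.Nonempty) :
    {C : (G.induce {v : V | v ∉ S}).ConnectedComponent |
        ∃ s₁ ∈ S, ∃ s₂ ∈ S, s₁ ≠ s₂ ∧
          (∃ v : {v : V | v ∉ S},
            (G.induce {v : V | v ∉ S}).connectedComponentMk v = C ∧ G.Adj ↑v s₁) ∧
          (∃ w : {v : V | v ∉ S},
            (G.induce {v : V | v ∉ S}).connectedComponentMk w = C ∧ G.Adj ↑w s₂)}.ncard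
      ≤ S.card - 1 :=
  components_adjacent_to_two_le_general G hG S hS
end
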